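/- If A and B are finite-dimensional K-algebras which are Morita equivalent and A is a symmetric algebra, then B is a symmetric algebra. -/

import Mathlib

/-!
By the Morita hypothesis, `B` is (anti-isomorphic to) the corner `e M_k(A) e` of a matrix algebra
over `A`. If `τ` is a symmetrizing form on `A`, then `τ ∘ trace` is one on `M_k(A)`, and the
restriction of a symmetrizing form `τ` on any algebra `R` to a corner `e R e` is again
symmetrizing: for `z ∈ e R e` and `r ∈ R`, `τ (z r) = τ (e z e r) = τ (z (e r e))`, so a `z`
orthogonal to the corner is orthogonal to all of `R`.
-/

/-- A finite-dimensional `K`-algebra is symmetric if it admits a symmetrizing form: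
a `K`-linear trace form `τ` with `τ(ab) = τ(ba)` whose associated bilinear form
`(a,b) ↦ τ(ab)` is non-degenerate. -/
def IsSymmetricAlgebraOfForm (K A : Type) [Field K] [Ring A] [Algebra K A] : Prop :=
  ∃ τ : A →ₗ[K] K, (∀ a b : A, τ (a * b) = τ (b * a)) ∧
    ∀ a : A, (∀ b : A, τ (a * b) = 0) → a = 0

section

variable {K : Type} [Field K]

theorem isSymmetricAlgebraOfForm_matrix {A : Type} [Ring A] [Algebra K A]
    (n : Type) [Fintype n] [DecidableEq n] (hA : IsSymmetricAlgebraOfForm K A) :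
    IsSymmetricAlgebraOfForm K (Matrix n n A) := by
  obtain ⟨τ, hτ_comm, hτ_nondeg⟩ := hA
  refine ⟨τ.comp (Matrix.traceLinearMap n K A), fun M N => ?_, fun M hM => ?_⟩
  · simp only [LinearMap.comp_apply, Matrix.traceLinearMap_apply, Matrix.trace, Matrix.diag,
      Matrix.mul_apply, map_sum]
    rw [Finset.sum_comm]
    simp only [hτ_comm]
  · ext i j
    refine hτ_nondeg _ fun a => ?_
    simpa [Matrix.trace_mul_single] using hM (Matrix.single j i a)

theorem IsSymmetricAlgebraOfForm.of_corner {R B : Type} [Ring R] [Algebra K R] [Ring B]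
    [Algebra K B] (hR : IsSymmetricAlgebraOfForm K R) {e : R} (he : e * e = e)
    (f : B →ₗ[K] R) (hf_mul : ∀ x y : B, f (x * y) = f y * f x)
    (hf_inj : Function.Injective f) (hf_range : Set.range f = {z | e * z * e = z}) :
    IsSymmetricAlgebraOfForm K B := by
  obtain ⟨τ, hτ_comm, hτ_nondeg⟩ := hR
  refine ⟨τ.comp f, fun x y => by simp only [LinearMap.comp_apply, hf_mul, hτ_comm], ?_⟩
  intro x hx
  have hx_corner : e * f x * e = f x := (hf_range ▸ Set.mem_range_self x :)
  have hex : e * f x = f x := by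
    rw [← hx_corner, ← mul_assoc, ← mul_assoc, he]
  have hxe : f x * e = f x := by
    rw [← hx_corner, mul_assoc, he]
  refine hf_inj (f.map_zero.symm ▸ hτ_nondeg (f x) fun r => ?_)
  obtain ⟨y, hy⟩ : e * r * e ∈ Set.range f := by
    rw [hf_range]
    change e * (e * r * e) * e = e * r * e
    rw [show e * (e * r * e) * e = (e * e) * r * (e * e) by noncomm_ring, he]
  calc τ (f x * r) = τ (e * (f x * r)) := by rw [← mul_assoc, hex]
    _ = τ (f x * r * e) := hτ_comm _ _
    _ = τ (f x * f y) := by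
        rw [hy]
        conv_lhs => rw [← hxe]
        simp only [mul_assoc]
    _ = 0 := by rw [hτ_comm, ← hf_mul]; exact hx y

end

theorem symmetric_of_moritaEquivalent_general
    (K A B : Type) [Field K] [Ring A] [Ring B] [Algebra K A] [Algebra K B]
    (hM : ∃ (k : ℕ) (e : Matrix (Fin k) (Fin k) A) (f : B →ₗ[K] Matrix (Fin k) (Fin k) A),
      e * e = e ∧
      (∃ (s : ℕ) (a b : Fin s → Matrix (Fin k) (Fin k) A), ∑ i, a i * e * b i = 1) ∧
      f 1 = e ∧ (∀ x y : B, f (x * y) = f y * f x) ∧ Function.Injective f ∧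
      Set.range f = {z | e * z * e = z})
    (hA : IsSymmetricAlgebraOfForm K A) : IsSymmetricAlgebraOfForm K B := by
  obtain ⟨k, e, f, he, -, -, hf_mul, hf_inj, hf_range⟩ := hM
  exact (isSymmetricAlgebraOfForm_matrix (Fin k) hA).of_corner he f hf_mul hf_inj hf_range

/-- If two finite-dimensional `K`-algebras `A`, `B` are Morita equivalent (expressed by
`B^{op} ≅ e·M_k(A)·e` for a full idempotent `e` of a matrix algebra over `A`) and `A` is
a symmetric algebra, then `B` is a symmetric algebra. -/
theorem symmetric_of_moritaEquivalent
    (K A B : Type) [Field K] [Ring A] [Ring B] [Algebra K A] [Algebra K B]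
    [FiniteDimensional K A] [FiniteDimensional K B]
    (hM : ∃ (k : ℕ) (e : Matrix (Fin k) (Fin k) A) (f : B →ₗ[K] Matrix (Fin k) (Fin k) A),
      e * e = e ∧
      (∃ (s : ℕ) (a b : Fin s → Matrix (Fin k) (Fin k) A), ∑ i, a i * e * b i = 1) ∧
      f 1 = e ∧ (∀ x y : B, f (x * y) = f y * f x) ∧ Function.Injective f ∧
      Set.range f = {z | e * z * e = z})
    (hA : IsSymmetricAlgebraOfForm K A) : IsSymmetricAlgebraOfForm K B :=
  symmetric_of_moritaEquivalent_general K A B hM hA
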